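/- Let y, b ∈ ℂ be not both zero, and let A be the ℂ-algebra generated by F₁₂, F₁₄, F₃₄ subject to the relations [F₁₂,F₁₄] = y, [F₃₄,F₁₄] = b, [F₁₂,F₃₄] = 0; this is the stratum algebra ⱼO(Z_g)ⱼ of Example 7.5, Case I(1), after setting F₂₃ = 0, F₁₃ = y, F₂₄ = b. Then the element bF₁₂ − yF₃₄ is central in A, and A ≅ ℂ[t] ⊗ A₁(ℂ), the tensor product of a polynomial ring in one variable with the first Weyl algebra. -/

import Mathlib

open scoped TensorProduct

noncomputable section

/-- The defining relation `pq = qp + 1` of the first Weyl algebra. -/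
inductive weylRel : FreeAlgebra ℂ (Fin 2) → FreeAlgebra ℂ (Fin 2) → Prop
  | comm : weylRel (FreeAlgebra.ι ℂ 0 * FreeAlgebra.ι ℂ 1)
      (FreeAlgebra.ι ℂ 1 * FreeAlgebra.ι ℂ 0 + 1)

/-- The first Weyl algebra `A₁(ℂ) = ℂ⟨p,q⟩/(pq − qp − 1)`. -/
abbrev WeylAlgebra : Type := RingQuot weylRel

/-- q-past-p^n commutation with a scalar defect. -/
lemma aux_qpow_comm {T : Type} [Ring T] [Algebra ℂ T] {P Q : T} (β : ℂ)
    (h : Q * P = P * Q - β • 1) :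
    ∀ n : ℕ, Q * P ^ n = P ^ n * Q - ((n : ℂ) * β) • P ^ (n - 1) := by
  intro n
  induction n with
  | zero => simp
  | succ m ih =>
    have h3 : Q * P ^ (m + 1)
        = P ^ (m + 1) * Q - β • P ^ m - ((m : ℂ) * β) • (P ^ (m - 1) * P) := by
      rw [pow_succ, ← mul_assoc, ih, sub_mul, smul_mul_assoc, mul_assoc, h, mul_sub,
        mul_smul_comm, mul_one, ← mul_assoc, ← pow_succ]
    rw [h3]
    rcases m with _ | m'
    · simp
    · rw [Nat.add_sub_cancel, ← pow_succ, Nat.add_sub_cancel]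
      match_scalars <;> push_cast <;> ring

/-- If a submodule contains 1 and is stable under left multiplication by a
generating set of the algebra, it is everything. -/
lemma aux_span_top_of_adjoin {T : Type} [Ring T] [Algebra ℂ T] (g : Set T)
    (S : Submodule ℂ T) (h1 : (1 : T) ∈ S)
    (hg : ∀ x ∈ g, ∀ s ∈ S, x * s ∈ S)
    (htop : Algebra.adjoin ℂ g = ⊤) : ∀ x : T, x ∈ S := by
  have key : ∀ x ∈ Algebra.adjoin ℂ g, ∀ s ∈ S, x * s ∈ S := by
    intro x hx
    induction hx using Algebra.adjoin_induction with
    | mem z hz => exact hg z hz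
    | algebraMap r => intro s hs; rw [← Algebra.smul_def]; exact S.smul_mem r hs
    | add u v hu hv h1' h2' => intro s hs; rw [add_mul]; exact S.add_mem (h1' s hs) (h2' s hs)
    | mul u v hu hv h1' h2' => intro s hs; rw [mul_assoc]; exact h1' _ (h2' s hs)
  intro x
  have hx : x ∈ Algebra.adjoin ℂ g := by rw [htop]; trivial
  simpa using key x hx 1 h1

lemma aux_adjoin_top :
    Algebra.adjoin ℂ
      ({Polynomial.X ⊗ₜ[ℂ] 1,
        (1 : Polynomial ℂ) ⊗ₜ[ℂ] RingQuot.mkAlgHom ℂ weylRel (FreeAlgebra.ι ℂ 0),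
        (1 : Polynomial ℂ) ⊗ₜ[ℂ] RingQuot.mkAlgHom ℂ weylRel (FreeAlgebra.ι ℂ 1)} :
        Set (Polynomial ℂ ⊗[ℂ] WeylAlgebra)) = ⊤ := by
  set G : Set (Polynomial ℂ ⊗[ℂ] WeylAlgebra) :=
    {Polynomial.X ⊗ₜ[ℂ] 1,
     (1 : Polynomial ℂ) ⊗ₜ[ℂ] RingQuot.mkAlgHom ℂ weylRel (FreeAlgebra.ι ℂ 0),
     (1 : Polynomial ℂ) ⊗ₜ[ℂ] RingQuot.mkAlgHom ℂ weylRel (FreeAlgebra.ι ℂ 1)} with hG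
  rw [eq_top_iff]
  rintro x -
  have hf : ∀ f : Polynomial ℂ, (f ⊗ₜ[ℂ] (1 : WeylAlgebra)) ∈ Algebra.adjoin ℂ G := by
    intro f
    induction f using Polynomial.induction_on' with
    | add p q hp hq => rw [TensorProduct.add_tmul]; exact add_mem hp hq
    | monomial n a =>
      have key : (Polynomial.monomial n a : Polynomial ℂ) ⊗ₜ[ℂ] (1 : WeylAlgebra)
          = algebraMap ℂ _ a * (Polynomial.X ⊗ₜ[ℂ] (1 : WeylAlgebra)) ^ n := by
        rw [Algebra.TensorProduct.tmul_pow, one_pow, Algebra.TensorProduct.algebraMap_apply,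
          Algebra.TensorProduct.tmul_mul_tmul, one_mul, Polynomial.algebraMap_eq,
          Polynomial.C_mul_X_pow_eq_monomial]
      rw [key]
      exact mul_mem (algebraMap_mem _ a)
        (pow_mem (Algebra.subset_adjoin (by simp [hG])) n)
  have hw : ∀ w : WeylAlgebra,
      ((1 : Polynomial ℂ) ⊗ₜ[ℂ] w) ∈ Algebra.adjoin ℂ G := by
    intro w
    obtain ⟨v, rfl⟩ := RingQuot.mkAlgHom_surjective ℂ weylRel w
    induction v using FreeAlgebra.induction with
    | grade0 r =>
      have : (1 : Polynomial ℂ) ⊗ₜ[ℂ] (RingQuot.mkAlgHom ℂ weylRel (algebraMap ℂ _ r))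
          = algebraMap ℂ (Polynomial ℂ ⊗[ℂ] WeylAlgebra) r := by
        rw [AlgHom.commutes]
        exact (Algebra.TensorProduct.includeRight.commutes r)
      rw [this]; exact algebraMap_mem _ r
    | grade1 i =>
      fin_cases i
      · exact Algebra.subset_adjoin (by simp [hG])
      · exact Algebra.subset_adjoin (by simp [hG])
    | mul u v hu hv =>
      rw [map_mul, show ((1:Polynomial ℂ) ⊗ₜ[ℂ] (RingQuot.mkAlgHom ℂ weylRel u * RingQuot.mkAlgHom ℂ weylRel v))
          = ((1:Polynomial ℂ) ⊗ₜ[ℂ] RingQuot.mkAlgHom ℂ weylRel u) * ((1:Polynomial ℂ) ⊗ₜ[ℂ] RingQuot.mkAlgHom ℂ weylRel v) by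
          rw [Algebra.TensorProduct.tmul_mul_tmul, one_mul]]
      exact mul_mem hu hv
    | add u v hu hv =>
      rw [map_add, TensorProduct.tmul_add]; exact add_mem hu hv
  induction x using TensorProduct.induction_on with
  | zero => exact zero_mem _
  | tmul f w =>
    rw [show f ⊗ₜ[ℂ] w = (f ⊗ₜ[ℂ] (1:WeylAlgebra)) * ((1:Polynomial ℂ) ⊗ₜ[ℂ] w) by
      rw [Algebra.TensorProduct.tmul_mul_tmul, mul_one, one_mul]]
    exact mul_mem (hf f) (hw w)
  | add u v hu hv => exact add_mem hu hv


lemma aux_tt_eq {M : Type} [AddCommGroup M] [Module ℂ M] (Pt tt : M) {y : ℂ} (b : ℂ)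
    (hy : y ≠ 0) : tt = (y * b) • Pt - y • (b • Pt - y⁻¹ • tt) := by
  match_scalars <;> field_simp <;> ring

lemma aux_UPt {T : Type} [Ring T] [Algebra ℂ T] (Pt tt : T) (b yi : ℂ)
    (h : tt * Pt = Pt * tt) :
    Pt * (b • Pt - yi • tt) = (b • Pt - yi • tt) * Pt := by
  rw [mul_sub, sub_mul, mul_smul_comm, mul_smul_comm, smul_mul_assoc, smul_mul_assoc, h]

lemma aux_QU {T : Type} [Ring T] [Algebra ℂ T] (Pt Qt tt : T) (b yi : ℂ)
    (hQPt : Qt * Pt = Pt * Qt - (1 : ℂ) • 1) (hQttt : tt * Qt = Qt * tt) :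
    Qt * (b • Pt - yi • tt) = (b • Pt - yi • tt) * Qt - b • 1 := by
  rw [mul_sub, sub_mul, mul_smul_comm, mul_smul_comm, smul_mul_assoc, smul_mul_assoc,
    hQPt, ← hQttt]
  module

lemma aux_span {T : Type} [Ring T] [Algebra ℂ T] (Pt U Qt tt : T) (y b : ℂ)
    (hUPt : Pt * U = U * Pt)
    (hQPt : Qt * Pt = Pt * Qt - (1 : ℂ) • 1)
    (hQU : Qt * U = U * Qt - b • 1)
    (htt : tt = (y * b) • Pt - y • U)
    (hadj : Algebra.adjoin ℂ {tt, Pt, Qt} = ⊤) :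
    ∀ x : T, x ∈ Submodule.span ℂ
      (Set.range fun m : ℕ × ℕ × ℕ => Pt ^ m.1 * U ^ m.2.1 * Qt ^ m.2.2) := by
  set S : Submodule ℂ T :=
    Submodule.span ℂ (Set.range fun m : ℕ × ℕ × ℕ => Pt ^ m.1 * U ^ m.2.1 * Qt ^ m.2.2)
    with hS_def
  have hUPt' : Commute Pt U := hUPt
  have hmemS : ∀ i j k : ℕ, Pt ^ i * U ^ j * Qt ^ k ∈ S := fun i j k =>
    Submodule.subset_span ⟨(i, j, k), rfl⟩
  have hmulP : ∀ s ∈ S, Pt * s ∈ S := by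
    intro s hs
    induction hs using Submodule.span_induction with
    | mem z h =>
      obtain ⟨⟨i, j, k⟩, rfl⟩ := h
      show Pt * (Pt ^ i * U ^ j * Qt ^ k) ∈ S
      rw [← mul_assoc, ← mul_assoc, ← pow_succ']
      exact hmemS _ _ _
    | zero => rw [mul_zero]; exact S.zero_mem
    | add u v hu hv h h' => rw [mul_add]; exact S.add_mem h h'
    | smul a u hu h => rw [mul_smul_comm]; exact S.smul_mem a h
  have hmulU : ∀ s ∈ S, U * s ∈ S := by
    intro s hs
    induction hs using Submodule.span_induction with
    | mem z h =>
      obtain ⟨⟨i, j, k⟩, rfl⟩ := h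
      show U * (Pt ^ i * U ^ j * Qt ^ k) ∈ S
      rw [← mul_assoc, ← mul_assoc, ← (hUPt'.pow_left i).eq, mul_assoc (Pt ^ i) U (U ^ j),
        ← pow_succ']
      exact hmemS _ _ _
    | zero => rw [mul_zero]; exact S.zero_mem
    | add u v hu hv h h' => rw [mul_add]; exact S.add_mem h h'
    | smul a u hu h => rw [mul_smul_comm]; exact S.smul_mem a h
  have hmultt : ∀ s ∈ S, tt * s ∈ S := by
    intro s hs
    rw [htt, sub_mul, smul_mul_assoc, smul_mul_assoc]
    exact S.sub_mem (S.smul_mem _ (hmulP s hs)) (S.smul_mem _ (hmulU s hs))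
  have hQPtpow := aux_qpow_comm (1 : ℂ) hQPt
  have hQUpow := aux_qpow_comm b hQU
  have hmulQ : ∀ s ∈ S, Qt * s ∈ S := by
    intro s hs
    induction hs using Submodule.span_induction with
    | mem z h =>
      obtain ⟨⟨i, j, k⟩, rfl⟩ := h
      show Qt * (Pt ^ i * U ^ j * Qt ^ k) ∈ S
      rw [← mul_assoc, ← mul_assoc, hQPtpow i, sub_mul, sub_mul, smul_mul_assoc,
        smul_mul_assoc]
      refine S.sub_mem ?_ (S.smul_mem _ (hmemS _ _ _))
      rw [mul_assoc (Pt ^ i) Qt (U ^ j), hQUpow j, mul_sub, sub_mul, mul_smul_comm,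
        smul_mul_assoc]
      refine S.sub_mem ?_ (S.smul_mem _ (hmemS _ _ _))
      rw [← mul_assoc, mul_assoc (Pt ^ i * U ^ j) Qt (Qt ^ k), ← pow_succ']
      exact hmemS _ _ _
    | zero => rw [mul_zero]; exact S.zero_mem
    | add u v hu hv h h' => rw [mul_add]; exact S.add_mem h h'
    | smul a u hu h => rw [mul_smul_comm]; exact S.smul_mem a h
  refine aux_span_top_of_adjoin {tt, Pt, Qt} S (by simpa using hmemS 0 0 0) ?_ hadj
  rintro x (rfl | rfl | rfl)
  · exact hmultt
  · exact hmulP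
  · exact hmulQ

set_option maxHeartbeats 1000000 in
theorem stratum_main
    (A : Type) [Ring A] [Algebra ℂ A] (F12 F14 F34 : A) (y b : ℂ)
    (hy : y ≠ 0)
    (B : Module.Basis (ℕ × ℕ × ℕ) ℂ A)
    (hB : ∀ i j k : ℕ, B (i, j, k) = F12 ^ i * F34 ^ j * F14 ^ k)
    (r1 : F12 * F14 - F14 * F12 = algebraMap ℂ A y)
    (r2 : F34 * F14 - F14 * F34 = algebraMap ℂ A b)
    (r3 : F12 * F34 = F34 * F12) :
    (∀ x : A, Commute (b • F12 - y • F34) x)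
    ∧ Nonempty (A ≃ₐ[ℂ] (Polynomial ℂ ⊗[ℂ] WeylAlgebra)) := by
  have h1 : F12 * F14 = y • (1:A) + F14 * F12 := by
    rw [← Algebra.algebraMap_eq_smul_one]; exact sub_eq_iff_eq_add.mp r1
  have h2 : F34 * F14 = b • (1:A) + F14 * F34 := by
    rw [← Algebra.algebraMap_eq_smul_one]; exact sub_eq_iff_eq_add.mp r2
  have hc12 : Commute (b • F12 - y • F34) F12 :=
    ((Commute.refl F12).smul_left b).sub_left
      ((show Commute F34 F12 from r3.symm).smul_left y)
  have hc34 : Commute (b • F12 - y • F34) F34 :=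
    ((show Commute F12 F34 from r3).smul_left b).sub_left
      ((Commute.refl F34).smul_left y)
  have hc14 : Commute (b • F12 - y • F34) F14 := by
    show (b • F12 - y • F34) * F14 = F14 * (b • F12 - y • F34)
    calc (b • F12 - y • F34) * F14 = b • (F12 * F14) - y • (F34 * F14) := by
          rw [sub_mul, smul_mul_assoc, smul_mul_assoc]
      _ = b • (y • (1:A) + F14 * F12) - y • (b • (1:A) + F14 * F34) := by rw [h1, h2]
      _ = b • (F14 * F12) - y • (F14 * F34) := by
          rw [smul_add, smul_add, smul_smul, smul_smul, mul_comm y b]; abel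
      _ = F14 * (b • F12 - y • F34) := by rw [mul_sub, mul_smul_comm, mul_smul_comm]
  have hcentral : ∀ x : A, Commute (b • F12 - y • F34) x := by
    intro x
    have hx : x ∈ Submodule.span ℂ (Set.range ⇑B) := by rw [B.span_eq]; trivial
    induction hx using Submodule.span_induction with
    | mem z h =>
      obtain ⟨⟨i, j, k⟩, rfl⟩ := h
      rw [hB]
      exact ((hc12.pow_right i).mul_right (hc34.pow_right j)).mul_right (hc14.pow_right k)
    | zero => exact Commute.zero_right _
    | add u v hu hv h h' => exact h.add_right h'
    | smul a u hu h => exact h.smul_right a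
  refine ⟨hcentral, ?_⟩
  -- Weyl algebra generators and the map into A
  set P : WeylAlgebra := RingQuot.mkAlgHom ℂ weylRel (FreeAlgebra.ι ℂ 0) with hP_def
  set Q : WeylAlgebra := RingQuot.mkAlgHom ℂ weylRel (FreeAlgebra.ι ℂ 1) with hQ_def
  have hPQW : P * Q = Q * P + 1 := by
    rw [hP_def, hQ_def, ← map_mul, ← map_mul, ← map_one (RingQuot.mkAlgHom ℂ weylRel),
      ← map_add]
    exact RingQuot.mkAlgHom_rel ℂ weylRel.comm
  have hpq : (y⁻¹ • F12) * F14 = F14 * (y⁻¹ • F12) + 1 := by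
    rw [smul_mul_assoc, h1, smul_add, smul_smul, inv_mul_cancel₀ hy, one_smul, mul_smul_comm]
    exact add_comm _ _
  have hrel : ∀ ⦃u v : FreeAlgebra ℂ (Fin 2)⦄, weylRel u v →
      (FreeAlgebra.lift ℂ ![y⁻¹ • F12, F14]) u = (FreeAlgebra.lift ℂ ![y⁻¹ • F12, F14]) v := by
    rintro _ _ ⟨⟩
    simp only [map_mul, map_add, map_one, FreeAlgebra.lift_ι_apply, Matrix.cons_val_zero,
      Matrix.cons_val_one, Matrix.head_cons]
    exact hpq
  set wmap : WeylAlgebra →ₐ[ℂ] A :=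
    RingQuot.liftAlgHom ℂ ⟨FreeAlgebra.lift ℂ ![y⁻¹ • F12, F14], hrel⟩ with hwmap_def
  have hwP : wmap P = y⁻¹ • F12 := by
    rw [hP_def, hwmap_def, RingQuot.liftAlgHom_mkAlgHom_apply, FreeAlgebra.lift_ι_apply]
    rfl
  have hwQ : wmap Q = F14 := by
    rw [hQ_def, hwmap_def, RingQuot.liftAlgHom_mkAlgHom_apply, FreeAlgebra.lift_ι_apply]
    rfl
  have hcomm : ∀ (f : Polynomial ℂ) (x : WeylAlgebra),
      Commute ((Polynomial.aeval (b • F12 - y • F34)) f) (wmap x) := by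
    intro f x
    have hcmem : (b • F12 - y • F34) ∈ Subalgebra.center ℂ A :=
      Subalgebra.mem_center_iff.mpr fun z => ((hcentral z).symm)
    have hmem : (Polynomial.aeval (b • F12 - y • F34)) f ∈ Subalgebra.center ℂ A :=
      Algebra.adjoin_le (Set.singleton_subset_iff.mpr hcmem)
        (Polynomial.aeval_mem_adjoin_singleton ℂ _)
    exact (Subalgebra.mem_center_iff.mp hmem (wmap x)).symm
  set ψ : Polynomial ℂ ⊗[ℂ] WeylAlgebra →ₐ[ℂ] A :=
    Algebra.TensorProduct.lift (Polynomial.aeval (b • F12 - y • F34)) wmap hcomm with hψ_def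
  -- distinguished elements of the tensor algebra
  set Pt : Polynomial ℂ ⊗[ℂ] WeylAlgebra := (1 : Polynomial ℂ) ⊗ₜ[ℂ] P with hPt_def
  set Qt : Polynomial ℂ ⊗[ℂ] WeylAlgebra := (1 : Polynomial ℂ) ⊗ₜ[ℂ] Q with hQt_def
  set tt : Polynomial ℂ ⊗[ℂ] WeylAlgebra := Polynomial.X ⊗ₜ[ℂ] 1 with htt_def
  set U : Polynomial ℂ ⊗[ℂ] WeylAlgebra := b • Pt - y⁻¹ • tt with hU_def
  have hpsiPt : ψ Pt = y⁻¹ • F12 := by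
    rw [hPt_def, hψ_def, Algebra.TensorProduct.lift_tmul, map_one, one_mul, hwP]
  have hpsiQt : ψ Qt = F14 := by
    rw [hQt_def, hψ_def, Algebra.TensorProduct.lift_tmul, map_one, one_mul, hwQ]
  have hpsitt : ψ tt = b • F12 - y • F34 := by
    rw [htt_def, hψ_def, Algebra.TensorProduct.lift_tmul, map_one, mul_one, Polynomial.aeval_X]
  have hpsiU : ψ U = F34 := by
    rw [hU_def, map_sub, map_smul, map_smul, hpsiPt, hpsitt]
    match_scalars <;> field_simp <;> ring
  -- the inverse linear map
  set φ : A →ₗ[ℂ] Polynomial ℂ ⊗[ℂ] WeylAlgebra :=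
    B.constr ℂ (fun m => (y • Pt) ^ m.1 * U ^ m.2.1 * Qt ^ m.2.2) with hφ_def
  have hψφ : ∀ a : A, ψ (φ a) = a := by
    have key : (ψ.toLinearMap ∘ₗ φ) = LinearMap.id := by
      refine B.ext fun m => ?_
      obtain ⟨i, j, k⟩ := m
      have h12 : ψ (y • Pt) = F12 := by
        rw [map_smul, hpsiPt, smul_smul, mul_inv_cancel₀ hy, one_smul]
      simp only [LinearMap.comp_apply, LinearMap.id_apply, hφ_def, Module.Basis.constr_basis,
        AlgHom.toLinearMap_apply]
      rw [map_mul, map_mul, map_pow, map_pow, map_pow, h12, hpsiU, hpsiQt, hB]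
    intro a
    exact DFunLike.congr_fun key a
  -- commutation facts in the tensor algebra
  have hPttt : Commute tt Pt := by
    show tt * Pt = Pt * tt
    rw [htt_def, hPt_def, Algebra.TensorProduct.tmul_mul_tmul,
      Algebra.TensorProduct.tmul_mul_tmul, one_mul, mul_one, one_mul, mul_one]
  have hQttt : Commute tt Qt := by
    show tt * Qt = Qt * tt
    rw [htt_def, hQt_def, Algebra.TensorProduct.tmul_mul_tmul,
      Algebra.TensorProduct.tmul_mul_tmul, one_mul, mul_one, one_mul, mul_one]
  have hUPt : Pt * U = U * Pt := by
    rw [hU_def]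
    exact aux_UPt Pt tt b y⁻¹ hPttt.eq
  have hQPt : Qt * Pt = Pt * Qt - (1 : ℂ) • (1 : Polynomial ℂ ⊗[ℂ] WeylAlgebra) := by
    have hstep : Pt * Qt = Qt * Pt + 1 := by
      rw [hQt_def, hPt_def, Algebra.TensorProduct.tmul_mul_tmul,
        Algebra.TensorProduct.tmul_mul_tmul, one_mul, hPQW, TensorProduct.tmul_add]
      simp [Algebra.TensorProduct.one_def]
    rw [hstep, one_smul, add_sub_cancel_right]
  have hQU : Qt * U = U * Qt - b • (1 : Polynomial ℂ ⊗[ℂ] WeylAlgebra) := by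
    rw [hU_def]
    exact aux_QU Pt Qt tt b y⁻¹ hQPt hQttt.eq
  have htt_eq : tt = (y * b) • Pt - y • U := by
    rw [hU_def]
    exact aux_tt_eq Pt tt b hy
  have hadj : Algebra.adjoin ℂ
      ({tt, Pt, Qt} : Set (Polynomial ℂ ⊗[ℂ] WeylAlgebra)) = ⊤ := by
    rw [htt_def, hPt_def, hQt_def, hP_def, hQ_def]
    exact aux_adjoin_top
  have hStop : ∀ x : Polynomial ℂ ⊗[ℂ] WeylAlgebra,
      x ∈ Submodule.span ℂ
        (Set.range fun m : ℕ × ℕ × ℕ => Pt ^ m.1 * U ^ m.2.1 * Qt ^ m.2.2) :=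
    aux_span Pt U Qt tt y b hUPt hQPt hQU htt_eq hadj
  -- φ is surjective
  have hφsurj : Function.Surjective φ := by
    have hle : Submodule.span ℂ
        (Set.range fun m : ℕ × ℕ × ℕ => Pt ^ m.1 * U ^ m.2.1 * Qt ^ m.2.2)
        ≤ LinearMap.range φ := by
      refine Submodule.span_le.mpr ?_
      rintro _ ⟨⟨i, j, k⟩, rfl⟩
      refine ⟨(y ^ i)⁻¹ • B (i, j, k), ?_⟩
      rw [map_smul, hφ_def, Module.Basis.constr_basis]
      show (y ^ i)⁻¹ • ((y • Pt) ^ i * U ^ j * Qt ^ k) = Pt ^ i * U ^ j * Qt ^ k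
      rw [smul_pow, smul_mul_assoc, smul_mul_assoc, smul_smul,
        inv_mul_cancel₀ (pow_ne_zero i hy), one_smul]
    intro z
    exact hle (hStop z)
  have hψsurj : Function.Surjective ψ := fun a => ⟨φ a, hψφ a⟩
  have hψinj : Function.Injective ψ := by
    intro u v huv
    obtain ⟨a, rfl⟩ := hφsurj u
    obtain ⟨a', rfl⟩ := hφsurj v
    rw [hψφ, hψφ] at huv
    rw [huv]
  exact ⟨(AlgEquiv.ofBijective ψ ⟨hψinj, hψsurj⟩).symm⟩
/-- Let `A` be the `ℂ`-algebra with generators `F₁₂, F₁₄, F₃₄` and relations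
`[F₁₂,F₁₄] = y·1`, `[F₃₄,F₁₄] = b·1`, `[F₁₂,F₃₄] = 0`, where `(y,b) ≠ (0,0)` (pinned
down by the PBW basis of ordered monomials `F₁₂^i F₃₄^j F₁₄^k`).  Then the element
`b•F₁₂ − y•F₃₄` is central in `A`, and `A ≅ ℂ[t] ⊗ A₁(ℂ)`, the tensor product of a
polynomial ring in one variable with the first Weyl algebra. -/
theorem stratum_algebra_iso_polynomial_tensor_weyl
    (A : Type) [Ring A] [Algebra ℂ A] (F12 F14 F34 : A) (y b : ℂ)
    (hyb : (y, b) ≠ (0, 0))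
    (B : Module.Basis (ℕ × ℕ × ℕ) ℂ A)
    (hB : ∀ i j k : ℕ, B (i, j, k) = F12 ^ i * F34 ^ j * F14 ^ k)
    (r1 : F12 * F14 - F14 * F12 = algebraMap ℂ A y)
    (r2 : F34 * F14 - F14 * F34 = algebraMap ℂ A b)
    (r3 : F12 * F34 = F34 * F12) :
    (∀ x : A, Commute (b • F12 - y • F34) x)
    ∧ Nonempty (A ≃ₐ[ℂ] (Polynomial ℂ ⊗[ℂ] WeylAlgebra)) := by

  by_cases hy : y = 0
  · subst hy
    have hb : b ≠ 0 := by
      intro hb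
      exact hyb (by rw [hb])
    let e : (ℕ × ℕ × ℕ) ≃ (ℕ × ℕ × ℕ) :=
      ⟨fun m => (m.2.1, m.1, m.2.2), fun m => (m.2.1, m.1, m.2.2),
        fun m => rfl, fun m => rfl⟩
    have hB' : ∀ i j k : ℕ, (B.reindex e) (i, j, k) = F34 ^ i * F12 ^ j * F14 ^ k := by
      intro i j k
      rw [Module.Basis.reindex_apply]
      show B (j, i, k) = F34 ^ i * F12 ^ j * F14 ^ k
      rw [hB, (show Commute F12 F34 from r3).pow_pow j i]
    obtain ⟨hcent, hiso⟩ :=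
      stratum_main A F34 F14 F12 b 0 hb (B.reindex e) hB' r2 r1 r3.symm
    refine ⟨?_, hiso⟩
    intro x
    have h := (hcent x).neg_left
    rwa [neg_sub] at h
  · exact stratum_main A F12 F14 F34 y b hy B hB r1 r2 r3
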